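/- arXiv:math/9904024 — 9 statements merged into one kernel-verified Lean document; each statement's English description precedes it below -/
import Mathlib

section
/- Let A be a 0–1 square matrix indexed by a finite set I, let B be the primitive transfer of A at p with data (M, K), and suppose l, n ∈ M with l ≠ n and A_{l,n} = 1. Then the matrix C defined by C_i = A_i for i ≠ l and C_l = A_l + A_n − E_n is again a 0–1 matrix. -/
open Finset

variable {I : Type*}

/-- `A` is a 0–1 matrix. -/
def ZeroOne (A : I → I → ℤ) : Prop := ∀ i j, A i j = 0 ∨ A i j = 1

/-- The row `E_j`, with a single `1` in column `j` and `0` elsewhere. -/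
def Erow [DecidableEq I] (j : I) : I → ℤ := fun j' => if j' = j then 1 else 0

/-- `B` is the primitive transfer of the 0–1 matrix `A` at `p` with data `(M, K)`:
`M` and `K` are disjoint, `p ∉ M`, the row `A_p` equals `∑_{m ∈ M} A_m + ∑_{k ∈ K} E_k`,
and `B` agrees with `A` away from row `p` while `B_p = ∑_{m ∈ M} E_m + ∑_{k ∈ K} E_k`. -/
def IsPrimTransfer [Fintype I] [DecidableEq I] (A : I → I → ℤ) (p : I)
    (M K : Finset I) (B : I → I → ℤ) : Prop :=
  ZeroOne A ∧ Disjoint M K ∧ p ∉ M ∧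
    (∀ j, A p j = (∑ m ∈ M, A m j) + ∑ k ∈ K, Erow k j) ∧
    (∀ i, i ≠ p → ∀ j, B i j = A i j) ∧
    (∀ j, B p j = (∑ m ∈ M, Erow m j) + ∑ k ∈ K, Erow k j)

theorem stmt1 {I : Type*} [Fintype I] [DecidableEq I]
    (A B : I → I → ℤ) (p : I) (M K : Finset I)
    (h : IsPrimTransfer A p M K B)
    (l n : I) (hl : l ∈ M) (hn : n ∈ M) (hln : l ≠ n) (hAln : A l n = 1) :
    ZeroOne (fun i j => if i = l then A l j + A n j - Erow n j else A i j) := by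
  obtain ⟨hA, -, -, hrow, -, -⟩ := h
  intro i j
  by_cases hi : i = l
  · simp only [hi, if_pos rfl]
    -- key: A l j + A n j ≤ 1
    have hpair : A l j + A n j = ∑ m ∈ ({l, n} : Finset I), A m j :=
      (Finset.sum_pair (f := fun m => A m j) hln).symm
    have hsub : ({l, n} : Finset I) ⊆ M := by
      intro x hx
      rcases Finset.mem_insert.mp hx with h1 | h1
      · exact h1 ▸ hl
      · exact (Finset.mem_singleton.mp h1) ▸ hn
    have hle1 : A l j + A n j ≤ ∑ m ∈ M, A m j := by
      rw [hpair]
      refine Finset.sum_le_sum_of_subset_of_nonneg hsub ?_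
      intro x _ _
      rcases hA x j with h1 | h1 <;> omega
    have hK : 0 ≤ ∑ k ∈ K, Erow k j := by
      refine Finset.sum_nonneg ?_
      intro k _
      unfold Erow; split <;> norm_num
    have hp : A p j = 0 ∨ A p j = 1 := hA p j
    have hkey : A l j + A n j ≤ 1 := by
      have := hrow j; omega
    by_cases hjn : j = n
    · simp only [Erow, if_pos hjn]
      have hlj : A l j = 1 := hjn ▸ hAln
      have h2 := hA n j
      omega
    · simp only [Erow, if_neg hjn]
      have h1 := hA l j
      have h2 := hA n j
      omega
  · simp only [if_neg hi]
    exact hA i j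
end

section
/- Let A be a 0–1 square matrix indexed by a finite set I, let B be the primitive transfer of A at p with data (M, K), and suppose l, n ∈ M with l ≠ n, A_{l,n} = 1, and p ∉ {l, n} (which holds automatically since p ∉ M). Define C by C_i = A_i for i ≠ l and C_l = A_l + A_n − E_n. Then A is a primitive transfer of C of size 1: with J = { j : A_{l,j} = 1 and j ≠ n }, one has C_l = C_n + ∑_{j∈J} E_j, the sets {n} and J are disjoint with l ∉ {n}, and the primitive transfer of C at l with data ({n}, J) equals A. -/
open Finset

variable {I : Type*}

theorem stmt2 {I : Type*} [Fintype I] [DecidableEq I]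
    (A B : I → I → ℤ) (p : I) (M K : Finset I)
    (h : IsPrimTransfer A p M K B)
    (l n : I) (hl : l ∈ M) (hn : n ∈ M) (hln : l ≠ n) (hAln : A l n = 1)
    (C : I → I → ℤ)
    (hC : ∀ i j, C i j = if i = l then A l j + A n j - Erow n j else A i j) :
    IsPrimTransfer C l {n} (Finset.univ.filter fun j => A l j = 1 ∧ j ≠ n) A ∧
      ({n} : Finset I).card = 1 := by
  obtain ⟨hA01, hMK, hpM, hrow, hBoff, hBp⟩ := h
  have hnonneg : ∀ i j, 0 ≤ A i j := fun i j => by rcases hA01 i j with h'|h' <;> simp [h']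
  have hle1 : ∀ i j, A i j ≤ 1 := fun i j => by rcases hA01 i j with h'|h' <;> simp [h']
  have key : ∀ j, A l j + A n j ≤ 1 := by
    intro j
    have h1 : A l j + A n j ≤ ∑ m ∈ M, A m j := by
      have hp : ∑ x ∈ ({l, n} : Finset I), A x j = A l j + A n j :=
        Finset.sum_pair hln
      rw [← hp]
      apply Finset.sum_le_sum_of_subset_of_nonneg
      · intro x hx
        simp only [Finset.mem_insert, Finset.mem_singleton] at hx
        rcases hx with rfl|rfl <;> assumption
      · intro i _ _; exact hnonneg i j
    have h2 : (0:ℤ) ≤ ∑ k ∈ K, Erow k j :=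
      Finset.sum_nonneg fun k _ => by unfold Erow; split <;> norm_num
    have h3 := hrow j
    linarith [hle1 p j]
  have hAnn : A n n = 0 := by
    have hk := key n
    rcases hA01 n n with h'|h'
    · exact h'
    · rw [hAln, h'] at hk; norm_num at hk
  set J := Finset.univ.filter fun j => A l j = 1 ∧ j ≠ n with hJ
  have hJmem : ∀ j, j ∈ J ↔ (A l j = 1 ∧ j ≠ n) := by
    intro j; simp [hJ]
  have hsumJ : ∀ j, (∑ k ∈ J, Erow k j) = if j ∈ J then 1 else 0 := by
    intro j
    unfold Erow
    exact Finset.sum_ite_eq J j (fun _ => (1:ℤ))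
  have hCn : ∀ j, C n j = A n j := fun j => by rw [hC]; exact if_neg (Ne.symm hln)
  refine ⟨⟨?_, ?_, ?_, ?_, ?_, ?_⟩, Finset.card_singleton n⟩
  · -- ZeroOne C
    intro i j
    rw [hC]
    split
    · by_cases hjn : j = n
      · subst hjn
        left
        unfold Erow
        rw [if_pos rfl, hAln, hAnn]
        ring
      · have hE : Erow n j = 0 := by unfold Erow; exact if_neg hjn
        rw [hE]
        have hk := key j
        rcases hA01 l j with h1|h1 <;> rcases hA01 n j with h2|h2 <;>
          rw [h1, h2] <;> norm_num
        rw [h1, h2] at hk; norm_num at hk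
    · exact hA01 i j
  · -- Disjoint {n} J
    rw [Finset.disjoint_singleton_left, hJmem]
    tauto
  · -- l ∉ {n}
    simp [hln]
  · -- row condition
    intro j
    rw [hC, if_pos rfl, Finset.sum_singleton, hCn, hsumJ]
    by_cases hjn : j = n
    · subst hjn
      rw [if_neg (by rw [hJmem]; tauto)]
      unfold Erow
      rw [if_pos rfl, hAln]
      ring
    · have hE : Erow n j = 0 := by unfold Erow; exact if_neg hjn
      rw [hE]
      rcases hA01 l j with h1|h1
      · rw [if_neg (by rw [hJmem]; rw [h1]; norm_num), h1]; ring
      · rw [if_pos ((hJmem j).2 ⟨h1, hjn⟩), h1]; ring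
  · -- A agrees with C off row l
    intro i hi j
    rw [hC, if_neg hi]
  · -- row l of A
    intro j
    rw [Finset.sum_singleton, hsumJ]
    by_cases hjn : j = n
    · subst hjn
      rw [if_neg (by rw [hJmem]; tauto)]
      unfold Erow
      rw [if_pos rfl, hAln]
      ring
    · have hE : Erow n j = 0 := by unfold Erow; exact if_neg hjn
      rw [hE]
      rcases hA01 l j with h1|h1
      · rw [if_neg (by rw [hJmem]; rw [h1]; norm_num), h1]; ring
      · rw [if_pos ((hJmem j).2 ⟨h1, hjn⟩), h1]; ring
end

section
/- Let A be a 0–1 square matrix indexed by a finite set I, let B be the primitive transfer of A at p with data (M, K), and suppose l, n ∈ M with l ≠ n and A_{l,n} = 1. Then (l, n) is the only edge of the graph G of the primitive transfer that ends at n: A_{m,n} = 0 for every m ∈ M with m ≠ l, and in particular A_{n,n} = 0, so the edge (l,n) is not a loop and G has no loop at n. -/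
open Finset

variable {I : Type*}

theorem stmt5 {I : Type*} [Fintype I] [DecidableEq I]
    (A B : I → I → ℤ) (p : I) (M K : Finset I)
    (h : IsPrimTransfer A p M K B)
    (l n : I) (hl : l ∈ M) (hn : n ∈ M) (hln : l ≠ n) (hAln : A l n = 1) :
    (∀ m ∈ M, m ≠ l → A m n = 0) ∧ A n n = 0 := by

  obtain ⟨h01, hdisj, hp, hrow, -, -⟩ := h
  have hnK : n ∉ K := fun hnK => (hdisj.forall_ne_finset hn hnK) rfl
  have hKsum : (∑ k ∈ K, Erow k n) = 0 := by
    apply Finset.sum_eq_zero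
    intro k hk
    simp only [Erow, if_neg (fun e : n = k => hnK (e ▸ hk))]
  have hpn : A p n = ∑ m ∈ M, A m n := by rw [hrow n, hKsum, add_zero]
  have hple : A p n ≤ 1 := by rcases h01 p n with h0 | h1 <;> omega
  have hsplit : (∑ m ∈ M, A m n) = A l n + ∑ m ∈ M.erase l, A m n :=
    (Finset.add_sum_erase M (fun m => A m n) hl).symm
  have hnonneg : ∀ m ∈ M.erase l, 0 ≤ A m n := by
    intro m hm; rcases h01 m n with h0 | h1 <;> omega
  have hS : (∑ m ∈ M.erase l, A m n) ≤ 0 := by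
    have := hpn ▸ hple
    rw [hsplit, hAln] at this; omega
  have hall : ∀ m ∈ M.erase l, A m n = 0 := by
    intro m hm
    have h1 := Finset.sum_le_sum_of_subset_of_nonneg
      (Finset.singleton_subset_iff.mpr hm) (fun i hi _ => hnonneg i hi)
    rw [Finset.sum_singleton] at h1
    have := hnonneg m hm
    omega
  refine ⟨fun m hm hml => hall m (Finset.mem_erase.mpr ⟨hml, hm⟩), ?_⟩
  exact hall n (Finset.mem_erase.mpr ⟨fun e => hln e.symm, hn⟩)
end

section
/- Let A be a 0–1 square matrix indexed by a finite set I, let B be the primitive transfer of A at p with data (M, K), and suppose l, n ∈ M with l ≠ n and A_{l,n} = 1. Define C by C_i = A_i for i ≠ l and C_l = A_l + A_n − E_n, let G be the graph of the given primitive transfer (the subgraph of A induced by M), and let H be the graph of the induced primitive transfer of C at p with data (M∖{n}, K∪{n}) (the subgraph of C induced by M∖{n}). If G is weakly connected (any two vertices of M are joined by a chain of edges of G traversed in either direction, i.e., related by the reflexive–transitive closure on M of the symmetric relation u ~ v iff A_{u,v} = 1 or A_{v,u} = 1 with u, v ∈ M), then H is weakly connected in the same sense. -/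
open Finset

variable {I : Type*}

/-- The induced subgraph of the digraph of `A` on the vertex set `S` is weakly connected:
any two vertices of `S` are related by the reflexive–transitive closure of the symmetric
relation `u ~ v` iff `u, v ∈ S` and (`A u v = 1` or `A v u = 1`). -/
def WeaklyConnected [DecidableEq I] (A : I → I → ℤ) (S : Finset I) : Prop :=
  ∀ u ∈ S, ∀ v ∈ S,
    Relation.ReflTransGen (fun x y => x ∈ S ∧ y ∈ S ∧ (A x y = 1 ∨ A y x = 1)) u v

theorem stmt6 {I : Type*} [Fintype I] [DecidableEq I]
    (A B : I → I → ℤ) (p : I) (M K : Finset I)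
    (h : IsPrimTransfer A p M K B)
    (l n : I) (hl : l ∈ M) (hn : n ∈ M) (hln : l ≠ n) (hAln : A l n = 1)
    (C : I → I → ℤ)
    (hC : ∀ i j, C i j = if i = l then A l j + A n j - Erow n j else A i j)
    (hG : WeaklyConnected A M) :
    WeaklyConnected C (M \ {n}) := by
  obtain ⟨hA, hMK, hpM, hrow, hB1, hB2⟩ := h
  -- At most one row indexed by M has a 1 in a given column.
  have col : ∀ j, ∀ m ∈ M, ∀ m' ∈ M, m ≠ m' → A m j = 1 → A m' j = 0 := by
    intro j m hm m' hm' hne h1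
    have hsub : ({m, m'} : Finset I) ⊆ M := by
      intro x hx
      simp only [Finset.mem_insert, Finset.mem_singleton] at hx
      rcases hx with rfl | rfl <;> assumption
    have hsum : A m j + A m' j ≤ ∑ x ∈ M, A x j := by
      have hpair : ∑ x ∈ ({m, m'} : Finset I), A x j = A m j + A m' j :=
        Finset.sum_pair hne
      rw [← hpair]
      apply Finset.sum_le_sum_of_subset_of_nonneg hsub
      intro x hx _
      rcases hA x j with h0 | h0 <;> simp [h0]
    have hE : (0:ℤ) ≤ ∑ k ∈ K, Erow k j := by
      apply Finset.sum_nonneg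
      intro k _
      unfold Erow
      split <;> norm_num
    have hp : A p j ≤ 1 := by rcases hA p j with h0 | h0 <;> simp [h0]
    have hr := hrow j
    rcases hA m' j with h0 | h1'
    · exact h0
    · exfalso; linarith
  set r' : I → I → Prop :=
    fun a b => a ∈ M \ {n} ∧ b ∈ M \ {n} ∧ (C a b = 1 ∨ C b a = 1) with hr'
  have hsymm : Symmetric r' := by
    rintro a b ⟨h1, h2, h3⟩
    exact ⟨h2, h1, h3.symm⟩
  set f : I → I := fun z => if z = n then l else z with hf
  have hfmem : ∀ z ∈ M, f z ∈ M \ {n} := by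
    intro z hz
    by_cases hzn : z = n <;> simp [hf, hzn, hl, hln, hz]
  have key : ∀ x ∈ M, ∀ y ∈ M, A x y = 1 →
      Relation.ReflTransGen r' (f x) (f y) := by
    intro x hx y hy hxy
    by_cases hyn : y = n
    · -- the only M-row with a 1 in column n is l, so x = l and f x = f y = l
      have hxl : x = l := by
        by_contra hne
        have h0 := col n l hl x hx (fun hh => hne hh.symm) hAln
        rw [hyn] at hxy
        omega
      have : f x = f y := by simp [hf, hxl, hyn, hln]
      rw [this]
    · have hCval : C (f x) y = 1 := by
        by_cases hxn : x = n
        · subst hxn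
          have h0 : A l y = 0 := col y x hx l hl (fun hh => hln hh.symm) hxy
          simp [hf, hC, Erow, hyn, hxy, h0]
        · by_cases hxl : x = l
          · have h0 : A n y = 0 := by
              rw [hxl] at hxy
              exact col y l hl n hn hln hxy
            rw [hxl] at hxy
            simp [hf, hxl, hln, hC, Erow, hyn, hxy, h0]
          · simp [hf, hxn, hC, hxl, hxy]
      have hfy : f y = y := by simp [hf, hyn]
      refine Relation.ReflTransGen.single ⟨hfmem x hx, ?_, Or.inl (by rwa [hfy])⟩
      rw [hfy]; simp [hy, hyn]
  intro u hu v hv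
  obtain ⟨huM, hun⟩ := Finset.mem_sdiff.mp hu
  obtain ⟨hvM, hvn⟩ := Finset.mem_sdiff.mp hv
  simp only [Finset.mem_singleton] at hun hvn
  have lift : ∀ {a b : I},
      Relation.ReflTransGen (fun x y => x ∈ M ∧ y ∈ M ∧ (A x y = 1 ∨ A y x = 1)) a b →
      Relation.ReflTransGen r' (f a) (f b) := by
    intro a b hab
    induction hab with
    | refl => exact Relation.ReflTransGen.refl
    | tail hbc step ih =>
        rcases step with ⟨hb, hc, hA1 | hA1⟩
        · exact ih.trans (key _ hb _ hc hA1)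
        · exact ih.trans (by haveI : Std.Symm r' := ⟨fun _ _ h => hsymm h⟩; exact Std.Symm.symm _ _ (key _ hc _ hb hA1))
  have main := lift (hG u huM v hvM)
  have hfu : f u = u := by simp [hf, hun]
  have hfv : f v = v := by simp [hf, hvn]
  rwa [hfu, hfv] at main
end

section
/- Let A be a 0–1 square matrix indexed by a finite set I, let B be the primitive transfer of A at p with data (M, K), and let F⁰ ⊆ M be a subset such that for all u ∈ F⁰ and v ∈ H⁰ := M ∖ F⁰ one has A_{u,v} = 0 and A_{v,u} = 0. Set J = { j ∈ I : A_{h,j} = 1 for some h ∈ H⁰ }. Then A_p = ∑_{m∈F⁰} A_m + ∑_{k∈K∪J} E_k, the sets F⁰ and K ∪ J are disjoint with p ∉ F⁰, so this equation determines a primitive transfer D of A at p with data (F⁰, K ∪ J), whose graph is the subgraph of A induced by F⁰. -/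
open Finset

variable {I : Type*}

theorem stmt8 {I : Type*} [Fintype I] [DecidableEq I]
    (A B : I → I → ℤ) (p : I) (M K : Finset I)
    (h : IsPrimTransfer A p M K B)
    (F0 : Finset I) (hF : F0 ⊆ M)
    (hsep : ∀ u ∈ F0, ∀ v ∈ M \ F0, A u v = 0 ∧ A v u = 0)
    (J : Finset I) (hJ : J = Finset.univ.filter fun j => ∃ h ∈ M \ F0, A h j = 1) :
    IsPrimTransfer A p F0 (K ∪ J)
      (fun i j => if i = p then (∑ m ∈ F0, Erow m j) + ∑ k ∈ K ∪ J, Erow k j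
        else A i j) := by
  obtain ⟨h01, hMK, hpM, hrow, -, -⟩ := h
  have hnn : ∀ i j, (0:ℤ) ≤ A i j := by
    intro i j; rcases h01 i j with h' | h' <;> simp [h']
  have hEK : ∀ (S : Finset I) (j : I), (∑ k ∈ S, Erow k j) = if j ∈ S then 1 else 0 := by
    intro S j
    simp only [Erow]
    rw [Finset.sum_ite_eq S j (fun _ => (1:ℤ))]
  -- split of row sum
  have hsplit : ∀ j, (∑ m ∈ M, A m j) = (∑ m ∈ F0, A m j) + ∑ m ∈ M \ F0, A m j := by
    intro j
    rw [add_comm, Finset.sum_sdiff hF]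
  have hJiff : ∀ j, j ∈ J ↔ ∃ h ∈ M \ F0, A h j = 1 := by
    intro j; simp [hJ]
  have hAp1 : ∀ j, A p j ≤ 1 := by
    intro j; rcases h01 p j with h' | h' <;> simp [h']
  have hsHnn : ∀ j, (0:ℤ) ≤ ∑ m ∈ M \ F0, A m j :=
    fun j => Finset.sum_nonneg fun i _ => hnn i j
  have hsFnn : ∀ j, (0:ℤ) ≤ ∑ m ∈ F0, A m j :=
    fun j => Finset.sum_nonneg fun i _ => hnn i j
  -- if j ∈ J then the H0-sum is at least 1
  have hJge : ∀ j ∈ J, (1:ℤ) ≤ ∑ m ∈ M \ F0, A m j := by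
    intro j hj
    obtain ⟨v, hv, hv1⟩ := (hJiff j).1 hj
    calc (1:ℤ) = A v j := hv1.symm
    _ ≤ _ := Finset.single_le_sum (fun i _ => hnn i j) hv
  -- key: value of H0-sum
  have hKJ : Disjoint K J := by
    rw [Finset.disjoint_left]
    intro j hK hJ'
    have h1 := hJge j hJ'
    have := hrow j
    rw [hsplit j, hEK K j, if_pos hK] at this
    have := hAp1 j
    have := hsFnn j
    omega
  have hsH : ∀ j, (∑ m ∈ M \ F0, A m j) = if j ∈ J then 1 else 0 := by
    intro j
    by_cases hj : j ∈ J
    · have h1 := hJge j hj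
      have h2 := hrow j
      rw [hsplit j, hEK K j] at h2
      have h3 := hAp1 j
      have h4 := hsFnn j
      rw [if_pos hj]
      by_cases hk : j ∈ K <;> simp [hk] at h2 <;> omega
    · rw [if_neg hj]
      apply Finset.sum_eq_zero
      intro v hv
      rcases h01 v j with h' | h'
      · exact h'
      · exact absurd ((hJiff j).2 ⟨v, hv, h'⟩) hj
  refine ⟨h01, ?_, fun hp => hpM (hF hp), ?_, ?_, ?_⟩
  · rw [Finset.disjoint_union_right]
    constructor
    · exact Finset.disjoint_of_subset_left hF hMK
    · rw [Finset.disjoint_left]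
      intro u hu huJ
      obtain ⟨v, hv, hv1⟩ := (hJiff u).1 huJ
      have := (hsep u hu v hv).2
      omega
  · intro j
    rw [hrow j, hsplit j, hEK (K ∪ J) j, hEK K j, hsH j]
    by_cases hk : j ∈ K <;> by_cases hj : j ∈ J
    · exact absurd hj (Finset.disjoint_left.1 hKJ hk)
    all_goals simp [hk, hj]
  · intro i hi j; simp [hi]
  · intro j; simp
end

section
/- Let A be a 0–1 square matrix indexed by a finite set I, let B be the primitive transfer of A at p with data (M, K), and let F⁰ ⊆ M be a subset such that for all u ∈ F⁰ and v ∈ H⁰ := M ∖ F⁰ one has A_{u,v} = 0 and A_{v,u} = 0. Set J = { j ∈ I : A_{h,j} = 1 for some h ∈ H⁰ } and let D be the primitive transfer of A at p with data (F⁰, K ∪ J). Then D_p = ∑_{m∈H⁰} D_m + ∑_{k∈K∪F⁰} E_k, the sets H⁰ and K ∪ F⁰ are disjoint with p ∉ H⁰, and the primitive transfer of D at p with data (H⁰, K ∪ F⁰) equals B. -/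
open Finset

variable {I : Type*}

theorem stmt9 {I : Type*} [Fintype I] [DecidableEq I]
    (A B : I → I → ℤ) (p : I) (M K : Finset I)
    (h : IsPrimTransfer A p M K B)
    (F0 : Finset I) (hF : F0 ⊆ M)
    (hsep : ∀ u ∈ F0, ∀ v ∈ M \ F0, A u v = 0 ∧ A v u = 0)
    (J : Finset I) (hJ : J = Finset.univ.filter fun j => ∃ h ∈ M \ F0, A h j = 1)
    (D : I → I → ℤ) (hD : IsPrimTransfer A p F0 (K ∪ J) D) :
    IsPrimTransfer D p (M \ F0) (K ∪ F0) B := by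
  obtain ⟨hA01, hMK, hpM, hArow, hBoff, hBp⟩ := h
  obtain ⟨-, hF0KJ, hpF0, hArow', hDoff, hDp⟩ := hD
  have hEsum : ∀ (S : Finset I) (j : I), (∑ k ∈ S, Erow k j) = if j ∈ S then 1 else 0 := by
    intro S j
    simp [Erow, Finset.sum_ite_eq]
  have hKJ : Disjoint K J := by
    rw [Finset.disjoint_left]
    intro j hjK hjJ
    rw [hJ, Finset.mem_filter] at hjJ
    obtain ⟨-, h0, hh0, hA1⟩ := hjJ
    have h1 := hArow j
    rw [hEsum] at h1
    simp only [hjK, if_pos] at h1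
    have hsum : (1 : ℤ) ≤ ∑ m ∈ M, A m j := by
      calc (1:ℤ) = A h0 j := hA1.symm
        _ ≤ ∑ m ∈ M, A m j := by
          refine Finset.single_le_sum (f := fun m => A m j) ?_ (Finset.mem_sdiff.mp hh0).1
          intro i _
          rcases hA01 i j with hh | hh <;> simp [hh]
    rcases hA01 p j with hh | hh <;> omega
  have hKF0 : Disjoint K F0 := (hMK.symm.mono_right hF)
  have hsplit : ∀ j, ∑ m ∈ M, A m j = (∑ m ∈ M \ F0, A m j) + ∑ m ∈ F0, A m j := by
    intro j
    exact (Finset.sum_sdiff hF).symm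
  have hkey : ∀ j, ∑ m ∈ M \ F0, A m j = ∑ k ∈ J, Erow k j := by
    intro j
    have h1 := hArow j
    have h2 := hArow' j
    rw [Finset.sum_union hKJ] at h2
    have h3 := hsplit j
    linarith
  refine ⟨?_, ?_, ?_, ?_, ?_, ?_⟩
  · intro i j
    by_cases hip : i = p
    · subst hip
      rw [hDp j, hEsum, hEsum]
      have := Finset.disjoint_left.mp hF0KJ
      by_cases h1 : j ∈ F0 <;> by_cases h2 : j ∈ K ∪ J <;>
        simp [h1, h2] <;> exact (this h1 h2).elim
    · rw [hDoff i hip j]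
      exact hA01 i j
  · rw [Finset.disjoint_union_right]
    exact ⟨Finset.disjoint_of_subset_left Finset.sdiff_subset hMK, Finset.sdiff_disjoint⟩
  · intro hp
    exact hpM (Finset.mem_sdiff.mp hp).1
  · intro j
    have hDA : ∑ m ∈ M \ F0, D m j = ∑ m ∈ M \ F0, A m j := by
      refine Finset.sum_congr rfl fun m hm => ?_
      exact hDoff m (fun he => hpM (he ▸ (Finset.mem_sdiff.mp hm).1)) j
    rw [hDp j, Finset.sum_union hKJ, Finset.sum_union hKF0, hDA]
    have := hkey j
    linarith
  · intro i hi j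
    rw [hBoff i hi j, hDoff i hi j]
  · intro j
    rw [hBp j, Finset.sum_union hKF0]
    have hs : (∑ m ∈ M \ F0, Erow m j) + ∑ m ∈ F0, Erow m j = ∑ m ∈ M, Erow m j :=
      Finset.sum_sdiff hF
    linarith
end

section
/- Let A be a 0–1 square matrix indexed by a finite set I and let B be the primitive transfer of A at p with data (M, K), whose graph is G (the subgraph of A induced by M). If F is a connected component of G with vertex set F⁰ ⊊ M (so G has several connected components), then there is a 0–1 matrix D such that D is the primitive transfer of A at p whose graph is the subgraph induced by F⁰, and B is the primitive transfer of D at p whose graph is the subgraph induced by M ∖ F⁰. -/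
open Finset

variable {I : Type*}

lemma sum_Erow [DecidableEq I] (S : Finset I) (j : I) :
    (∑ k ∈ S, Erow k j) = if j ∈ S then 1 else 0 := by
  simp [Erow, Finset.sum_ite_eq]

theorem stmt10 {I : Type*} [Fintype I] [DecidableEq I]
    (A B : I → I → ℤ) (p : I) (M K : Finset I)
    (h : IsPrimTransfer A p M K B)
    (F0 : Finset I) (hF : F0 ⊆ M) (hFne : F0.Nonempty) (hFprop : F0 ≠ M)
    (hsep : ∀ u ∈ F0, ∀ v ∈ M \ F0, A u v = 0 ∧ A v u = 0)
    (hFconn : WeaklyConnected A F0) :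
    ∃ (D : I → I → ℤ) (K₁ K₂ : Finset I),
      IsPrimTransfer A p F0 K₁ D ∧ IsPrimTransfer D p (M \ F0) K₂ B := by
  obtain ⟨hA01, hMK, hpM, hrow, hBoff, hBp⟩ := h
  set s : I → ℤ := fun j => (∑ m ∈ M \ F0, A m j) + ∑ k ∈ K, Erow k j with hs
  -- row split
  have hsplit : ∀ j, A p j = (∑ m ∈ F0, A m j) + s j := by
    intro j
    have := hrow j
    rw [← Finset.sum_sdiff hF] at this
    simpa [hs] using this.trans (by ring)
  have hA0 : ∀ i j, (0:ℤ) ≤ A i j := by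
    intro i j; rcases hA01 i j with h' | h' <;> omega
  have hsnn : ∀ j, 0 ≤ s j := by
    intro j
    have h1 : (0:ℤ) ≤ ∑ m ∈ M \ F0, A m j := Finset.sum_nonneg fun m _ => hA0 m j
    have h2 : (0:ℤ) ≤ ∑ k ∈ K, Erow k j := by
      rw [sum_Erow]; split <;> omega
    simp only [hs]; omega
  have hs01 : ∀ j, s j = 0 ∨ s j = 1 := by
    intro j
    have h1 : (0:ℤ) ≤ ∑ m ∈ F0, A m j := Finset.sum_nonneg fun m _ => hA0 m j
    have h2 := hsplit j
    rcases hA01 p j with h' | h' <;> have := hsnn j <;> omega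
  set K₁ : Finset I := Finset.univ.filter (fun j => s j = 1) with hK₁
  have hK₁sum : ∀ j, (∑ k ∈ K₁, Erow k j) = s j := by
    intro j
    rw [sum_Erow]
    rcases hs01 j with h' | h' <;> simp [hK₁, h']
  -- s vanishes on F0
  have hsF0 : ∀ j ∈ F0, s j = 0 := by
    intro j hj
    have h1 : (∑ m ∈ M \ F0, A m j) = 0 :=
      Finset.sum_eq_zero fun m hm => (hsep j hj m hm).2
    have h2 : j ∉ K := Finset.disjoint_left.mp hMK (hF hj)
    simp [hs, h1, sum_Erow, h2]
  set D : I → I → ℤ := fun i j =>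
    if i = p then (∑ m ∈ F0, Erow m j) + ∑ k ∈ K₁, Erow k j else A i j with hD
  have hDp : ∀ j, D p j = (if j ∈ F0 then 1 else 0) + s j := by
    intro j; simp [hD, sum_Erow, hK₁sum]
  refine ⟨D, K₁, F0 ∪ K, ⟨hA01, ?_, fun hc => hpM (hF hc), ?_, ?_, ?_⟩,
    ⟨?_, ?_, ?_, ?_, ?_, ?_⟩⟩
  · -- Disjoint F0 K₁
    rw [Finset.disjoint_left]
    intro j hj hj'
    have := hsF0 j hj
    simp only [hK₁, Finset.mem_filter] at hj'
    omega
  · intro j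
    rw [hsplit j, ← hK₁sum j]
  · intro i hi j; simp [hD, hi]
  · intro j; simp [hD]
  · -- ZeroOne D
    intro i j
    by_cases hi : i = p
    · subst hi
      rw [hDp j]
      have h2 := hs01 j
      by_cases hjF : j ∈ F0
      · have := hsF0 j hjF; simp [hjF]; omega
      · simp [hjF]; omega
    · simp only [hD, if_neg hi]; exact hA01 i j
  · -- Disjoint (M \ F0) (F0 ∪ K)
    rw [Finset.disjoint_left]
    intro j hj hj'
    rw [Finset.mem_sdiff] at hj
    rcases Finset.mem_union.mp hj' with h' | h'
    · exact hj.2 h'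
    · exact Finset.disjoint_left.mp hMK hj.1 h'
  · intro hc; exact hpM (Finset.mem_sdiff.mp hc).1
  · -- row: D p j = ∑_{M\F0} D m j + ∑_{F0∪K} Erow
    intro j
    have hDA : ∀ m ∈ M \ F0, D m j = A m j := by
      intro m hm
      have : m ≠ p := by rintro rfl; exact hpM (Finset.mem_sdiff.mp hm).1
      simp [hD, this]
    rw [Finset.sum_congr rfl hDA, hDp j]
    have hdis : Disjoint F0 K := Finset.disjoint_of_subset_left hF hMK
    rw [Finset.sum_union hdis, sum_Erow, sum_Erow]
    have h2 : j ∈ K ↔ (∑ k ∈ K, Erow k j) = 1 := by rw [sum_Erow]; split <;> simp_all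
    simp only [hs]
    by_cases hjK : j ∈ K <;> simp [hjK, sum_Erow] <;> ring
  · intro i hi j; simp [hD, hi, hBoff i hi j]
  · intro j
    rw [hBp j, ← Finset.sum_sdiff hF (f := fun m => Erow m j),
      Finset.sum_union (Finset.disjoint_of_subset_left hF hMK)]
    ring
end

section
/- Let A be a 0–1 square matrix indexed by a finite set I and suppose the matrix B is a primitive transfer of A (at some p with some data (M, K)). Then there is a finite sequence of 0–1 matrices A = C_1, C_2, …, C_n = B indexed by I such that for every 1 ≤ i ≤ n−1, either C_{i+1} is a primitive transfer of C_i of size 1, or C_i is a primitive transfer of C_{i+1} of size 1. -/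
open Finset

variable {I : Type*}

/-- Two matrices are related by a size-1 primitive transfer in one direction or the other. -/
def SizeOneStep [Fintype I] [DecidableEq I] (A B : I → I → ℤ) : Prop :=
  (∃ (p : I) (M K : Finset I), IsPrimTransfer A p M K B ∧ M.card = 1) ∨
  (∃ (p : I) (M K : Finset I), IsPrimTransfer B p M K A ∧ M.card = 1)

/-- A chain of size-one steps. -/
def Chain [Fintype I] [DecidableEq I] (A B : I → I → ℤ) : Prop :=
  ∃ (n : ℕ) (C : ℕ → I → I → ℤ), C 0 = A ∧ C n = B ∧
    (∀ i ≤ n, ZeroOne (C i)) ∧ ∀ i < n, SizeOneStep (C i) (C (i + 1))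

lemma chain_refl [Fintype I] [DecidableEq I] {A : I → I → ℤ} (h : ZeroOne A) :
    Chain A A := ⟨0, fun _ => A, rfl, rfl, fun _ _ => h, fun i hi => by omega⟩

lemma chain_single [Fintype I] [DecidableEq I] {A B : I → I → ℤ}
    (hA : ZeroOne A) (hB : ZeroOne B) (h : SizeOneStep A B) : Chain A B := by
  refine ⟨1, fun i => if i = 0 then A else B, by simp, by simp, ?_, ?_⟩
  · intro i _; dsimp only; split <;> assumption
  · intro i hi
    have : i = 0 := by omega
    subst this; simpa using h

lemma chain_trans [Fintype I] [DecidableEq I] {A B D : I → I → ℤ}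
    (h1 : Chain A B) (h2 : Chain B D) : Chain A D := by
  obtain ⟨n1, C1, hC10, hC1n, hZ1, hS1⟩ := h1
  obtain ⟨n2, C2, hC20, hC2n, hZ2, hS2⟩ := h2
  refine ⟨n1 + n2, fun i => if i < n1 then C1 i else C2 (i - n1), ?_, ?_, ?_, ?_⟩
  · dsimp only; split
    · exact hC10
    · have e : n1 = 0 := by omega
      have e2 : C2 (0 - n1) = B := by simp [e, hC20]
      rw [e2, ← hC1n, e, hC10]
  · dsimp only; split
    · omega
    · simpa using hC2n
  · intro i hi; dsimp only; split
    · exact hZ1 i (by omega)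
    · exact hZ2 (i - n1) (by omega)
  · intro i hi; dsimp only
    rcases lt_trichotomy (i + 1) n1 with h | h | h
    · rw [if_pos (by omega), if_pos h]; exact hS1 i (by omega)
    · rw [if_pos (by omega), if_neg (by omega)]
      have : i - n1 + 1 = 1 := by omega
      have e : C2 (i + 1 - n1) = C1 (i+1) := by
        have : i + 1 - n1 = 0 := by omega
        rw [this, hC20, ← hC1n, h]
      rw [e]; exact hS1 i (by omega)
    · rw [if_neg (by omega), if_neg (by omega)]
      have e : i + 1 - n1 = (i - n1) + 1 := by omega
      rw [e]; exact hS2 (i - n1) (by omega)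

lemma chain_left_zeroOne [Fintype I] [DecidableEq I] {A B : I → I → ℤ}
    (h : Chain A B) : ZeroOne A := by
  obtain ⟨n, C, h0, _, hZ, _⟩ := h
  rw [← h0]; exact hZ 0 (Nat.zero_le _)

lemma chain_right_zeroOne [Fintype I] [DecidableEq I] {A B : I → I → ℤ}
    (h : Chain A B) : ZeroOne B := by
  obtain ⟨n, C, _, hn, hZ, _⟩ := h
  rw [← hn]; exact hZ n le_rfl

lemma chain_cons [Fintype I] [DecidableEq I] {A B D : I → I → ℤ}
    (hA : ZeroOne A) (s : SizeOneStep A B) (h : Chain B D) : Chain A D :=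
  chain_trans (chain_single hA (chain_left_zeroOne h) s) h

lemma chain_snoc [Fintype I] [DecidableEq I] {A B D : I → I → ℤ}
    (h : Chain A B) (hD : ZeroOne D) (s : SizeOneStep B D) : Chain A D :=
  chain_trans h (chain_single (chain_right_zeroOne h) hD s)

/-- support of a 0-1 vector -/
def supp [Fintype I] [DecidableEq I] (v : I → ℤ) : Finset I :=
  Finset.univ.filter (fun j => v j = 1)

lemma mem_supp [Fintype I] [DecidableEq I] (v : I → ℤ) (j : I) :
    j ∈ supp v ↔ v j = 1 := by simp [supp]

lemma sum_erow [Fintype I] [DecidableEq I] (K : Finset I) (j : I) :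
    ∑ k ∈ K, Erow k j = if j ∈ K then 1 else 0 := by
  simp only [Erow]
  rw [Finset.sum_ite_eq K j (fun _ => (1 : ℤ))]

lemma sum_erow_supp [Fintype I] [DecidableEq I] (v : I → ℤ)
    (hv : ∀ j, v j = 0 ∨ v j = 1) (j : I) : ∑ k ∈ supp v, Erow k j = v j := by
  rw [sum_erow]
  rcases hv j with h | h <;> simp [mem_supp, h]

lemma transfer_zeroOne [Fintype I] [DecidableEq I] {A : I → I → ℤ} {p : I}
    {M K : Finset I} {B : I → I → ℤ} (h : IsPrimTransfer A p M K B) : ZeroOne B := by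
  obtain ⟨h01, hMK, hpM, hAp, hBoff, hBp⟩ := h
  intro i j
  by_cases hi : i = p
  · subst hi
    rw [hBp j, sum_erow, sum_erow]
    have : ¬(j ∈ M ∧ j ∈ K) := fun ⟨h1, h2⟩ => (Finset.disjoint_left.mp hMK h1) h2
    split_ifs <;> simp_all
  · rw [hBoff i hi j]; exact h01 i j

lemma key [Fintype I] [DecidableEq I] (M : Finset I) :
    ∀ (A : I → I → ℤ) (p : I) (K : Finset I) (B : I → I → ℤ),
      IsPrimTransfer A p M K B → Chain A B := by
  induction M using Finset.strongInduction with
  | _ M ih =>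
  intro A p K B h
  obtain ⟨h01, hMK, hpM, hAp, hBoff, hBp⟩ := h
  have hA0 : ∀ i j, 0 ≤ A i j := fun i j => by rcases h01 i j with h | h <;> omega
  have hA1 : ∀ i j, A i j ≤ 1 := fun i j => by rcases h01 i j with h | h <;> omega
  have hKnn : ∀ j, 0 ≤ ∑ k ∈ K, Erow k j := by
    intro j; rw [sum_erow]; split <;> norm_num
  -- partial sums of rows over subsets of M are bounded by row p
  have hsub : ∀ (S : Finset I), S ⊆ M → ∀ j, (∑ m ∈ S, A m j) ≤ A p j := by
    intro S hS j
    rw [hAp j]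
    have h1 : (∑ m ∈ S, A m j) ≤ ∑ m ∈ M, A m j :=
      Finset.sum_le_sum_of_subset_of_nonneg hS (fun m _ _ => hA0 m j)
    linarith [hKnn j]
  by_cases hM : M = ∅
  · -- B = A
    subst hM
    have hBA : B = A := by
      funext i j
      by_cases hi : i = p
      · subst hi; rw [hBp j, hAp j]; simp
      · exact hBoff i hi j
    rw [hBA]; exact chain_refl h01
  by_cases hex : ∃ m₁ ∈ M, ∃ m₂ ∈ M, m₁ ≠ m₂ ∧ A m₂ m₁ = 1
  · obtain ⟨m₁, hm₁, m₂, hm₂, hne, h21⟩ := hex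
    have hm₁p : m₁ ≠ p := fun e => hpM (e ▸ hm₁)
    have hm₂p : m₂ ≠ p := fun e => hpM (e ▸ hm₂)
    have hm₁K : m₁ ∉ K := fun hK => (Finset.disjoint_left.mp hMK hm₁) hK
    have pairsum : ∀ j, A m₁ j + A m₂ j ≤ A p j := by
      intro j
      have := hsub {m₁, m₂} (by
        intro x hx
        rcases Finset.mem_insert.mp hx with h | h
        · exact h ▸ hm₁
        · exact (Finset.mem_singleton.mp h) ▸ hm₂) j
      rwa [Finset.sum_pair hne] at this
    have hAm₁m₁ : A m₁ m₁ = 0 := by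
      have h1 := pairsum m₁; have h2 := hA1 p m₁; have h3 := hA0 m₁ m₁; omega
    set v : I → ℤ := fun j => A m₂ j - Erow m₁ j with hv
    have hErm₁ : Erow m₁ m₁ = (1 : ℤ) := by simp [Erow]
    have hv01 : ∀ j, v j = 0 ∨ v j = 1 := by
      intro j
      by_cases hj : j = m₁
      · subst hj; left; simp [hv, Erow, h21]
      · have : Erow m₁ j = 0 := by simp [Erow, hj]
        rcases h01 m₂ j with h | h <;> simp [hv, this, h]
    have hvm₁ : v m₁ = 0 := by simp [hv, Erow, h21]
    set D : I → I → ℤ :=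
      fun i => if i = m₂ then (fun j => A m₁ j + A m₂ j - Erow m₁ j) else A i with hD
    have hDoff : ∀ i, i ≠ m₂ → D i = A i := by intro i hi; simp [hD, hi]
    have hDm₂ : ∀ j, D m₂ j = A m₁ j + A m₂ j - Erow m₁ j := by intro j; simp [hD]
    have hZD : ZeroOne D := by
      intro i j
      by_cases hi : i = m₂
      · rw [hi, hDm₂]
        by_cases hj : j = m₁
        · left; rw [hj, hErm₁, hAm₁m₁, h21]; norm_num
        · have h0 : Erow m₁ j = 0 := by simp [Erow, hj]
          have h1 := pairsum j; have h2 := hA1 p j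
          rcases h01 m₁ j with h | h <;> rcases h01 m₂ j with h' | h' <;>
            rw [h0, h, h'] <;> omega
      · rw [hDoff i hi]; exact h01 i j
    have tr1 : IsPrimTransfer D m₂ {m₁} (supp v) A := by
      refine ⟨hZD, ?_, ?_, ?_, ?_, ?_⟩
      · rw [Finset.disjoint_singleton_left, mem_supp]; omega
      · simp [Ne.symm hne]
      · intro j
        rw [Finset.sum_singleton, sum_erow_supp v hv01, hDm₂,
          (by rw [hDoff m₁ hne] : D m₁ j = A m₁ j)]
        simp only [hv]; ring
      · intro i hi j; rw [hDoff i hi]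
      · intro j
        rw [Finset.sum_singleton, sum_erow_supp v hv01]
        simp [hv]
    have step1 : SizeOneStep A D :=
      Or.inr ⟨m₂, {m₁}, supp v, tr1, Finset.card_singleton m₁⟩
    have hm₂e : m₂ ∈ M.erase m₁ := Finset.mem_erase.mpr ⟨Ne.symm hne, hm₂⟩
    set B2 : I → I → ℤ := fun i => if i = p then
        (fun j => (∑ m ∈ M.erase m₁, Erow m j) + ∑ k ∈ insert m₁ K, Erow k j)
      else D i with hB2
    have hB2off : ∀ i, i ≠ p → B2 i = D i := by intro i hi; simp [hB2, hi]
    have hB2p : ∀ j, B2 p j =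
        (∑ m ∈ M.erase m₁, Erow m j) + ∑ k ∈ insert m₁ K, Erow k j := by
      intro j; simp [hB2]
    have trans2 : IsPrimTransfer D p (M.erase m₁) (insert m₁ K) B2 := by
      refine ⟨hZD, ?_, ?_, ?_, ?_, ?_⟩
      · rw [Finset.disjoint_insert_right]
        exact ⟨Finset.notMem_erase m₁ M,
          Finset.disjoint_of_subset_left (Finset.erase_subset m₁ M) hMK⟩
      · exact fun hp => hpM (Finset.mem_of_mem_erase hp)
      · intro j
        have e0 : D p j = A p j := by rw [hDoff p (Ne.symm hm₂p)]
        have e1 : ∑ m ∈ (M.erase m₁).erase m₂, D m j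
            = ∑ m ∈ (M.erase m₁).erase m₂, A m j :=
          Finset.sum_congr rfl fun m hm => by rw [hDoff m (Finset.ne_of_mem_erase hm)]
        have e2 : ∑ m ∈ (M.erase m₁).erase m₂, D m j + D m₂ j
            = ∑ m ∈ M.erase m₁, D m j := Finset.sum_erase_add _ _ hm₂e
        have e3 : ∑ m ∈ (M.erase m₁).erase m₂, A m j + A m₂ j
            = ∑ m ∈ M.erase m₁, A m j := Finset.sum_erase_add _ _ hm₂e
        have e4 : ∑ m ∈ M.erase m₁, A m j + A m₁ j = ∑ m ∈ M, A m j :=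
          Finset.sum_erase_add _ _ hm₁
        have e5 : ∑ k ∈ insert m₁ K, Erow k j = Erow m₁ j + ∑ k ∈ K, Erow k j :=
          Finset.sum_insert hm₁K
        have e6 := hAp j
        have e7 := hDm₂ j
        rw [e0, ← e2, e1, e5, e7, e6]
        linarith
      · intro i hi j; rw [hB2off i hi]
      · exact hB2p
    have hZB2 : ZeroOne B2 := transfer_zeroOne trans2
    have mid : Chain D B2 :=
      ih (M.erase m₁) (Finset.erase_ssubset hm₁) D p (insert m₁ K) B2 trans2
    have hZB : ZeroOne B := transfer_zeroOne
      (⟨h01, hMK, hpM, hAp, hBoff, hBp⟩ : IsPrimTransfer A p M K B)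
    have tr3 : IsPrimTransfer B2 m₂ {m₁} (supp v) B := by
      refine ⟨hZB2, ?_, ?_, ?_, ?_, ?_⟩
      · rw [Finset.disjoint_singleton_left, mem_supp]; omega
      · simp [Ne.symm hne]
      · intro j
        rw [Finset.sum_singleton, sum_erow_supp v hv01,
          (by rw [hB2off m₂ hm₂p] : B2 m₂ j = D m₂ j), hDm₂,
          (by rw [hB2off m₁ hm₁p, hDoff m₁ hne] : B2 m₁ j = A m₁ j)]
        simp only [hv]; ring
      · intro i hi j
        by_cases hip : i = p
        · subst hip
          rw [hBp j, hB2p j, Finset.sum_insert hm₁K]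
          have e4 : ∑ m ∈ M.erase m₁, Erow m j + Erow m₁ j = ∑ m ∈ M, Erow m j :=
            Finset.sum_erase_add _ _ hm₁
          linarith
        · rw [hBoff i hip j, hB2off i hip, hDoff i hi]
      · intro j
        rw [Finset.sum_singleton, sum_erow_supp v hv01, hBoff m₂ hm₂p j]
        simp [hv]
    have steplast : SizeOneStep B2 B :=
      Or.inl ⟨m₂, {m₁}, supp v, tr3, Finset.card_singleton m₁⟩
    exact chain_snoc (chain_cons h01 step1 mid) hZB steplast
  · -- every m₀ is "good": no other row of M hits column m₀
    obtain ⟨m₀, hm₀⟩ := Finset.nonempty_iff_ne_empty.mpr hM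
    push_neg at hex
    have hgood : ∀ m ∈ M, m ≠ m₀ → A m m₀ = 0 := by
      intro m hm hne
      rcases h01 m m₀ with h | h
      · exact h
      · exact absurd h (hex m₀ hm₀ m hm (Ne.symm hne))
    have hm₀p : m₀ ≠ p := fun e => hpM (e ▸ hm₀)
    set r : I → ℤ := fun j => A p j - A m₀ j with hr
    have hrm₀ : r m₀ = 0 := by
      have : A p m₀ = A m₀ m₀ := by
        rw [hAp m₀, ← Finset.sum_erase_add M _ hm₀]
        have : ∑ m ∈ M.erase m₀, A m m₀ = 0 :=
          Finset.sum_eq_zero fun m hm =>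
            hgood m (Finset.mem_of_mem_erase hm) (Finset.ne_of_mem_erase hm)
        rw [this, sum_erow, if_neg (fun hK => (Finset.disjoint_left.mp hMK hm₀) hK)]
        ring
      simp [hr, this]
    have hr01 : ∀ j, r j = 0 ∨ r j = 1 := by
      intro j
      have h1 : A m₀ j ≤ A p j := by
        have := hsub {m₀} (Finset.singleton_subset_iff.mpr hm₀) j
        simpa using this
      have := hA0 m₀ j; have := hA1 p j; have := hA0 p j
      simp only [hr]; omega
    set D : I → I → ℤ := fun i => if i = p then (fun j => Erow m₀ j + r j) else A i with hD
    have hDoff : ∀ i, i ≠ p → D i = A i := by intro i hi; simp [hD, hi]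
    have hDp : ∀ j, D p j = Erow m₀ j + r j := by intro j; simp [hD]
    have step1 : IsPrimTransfer A p {m₀} (supp r) D := by
      refine ⟨h01, ?_, ?_, ?_, ?_, ?_⟩
      · rw [Finset.disjoint_singleton_left, mem_supp]; omega
      · simp [Ne.symm hm₀p]
      · intro j
        rw [Finset.sum_singleton, sum_erow_supp r hr01]
        simp [hr]
      · intro i hi j; rw [hDoff i hi]
      · intro j
        rw [hDp, Finset.sum_singleton, sum_erow_supp r hr01]
    have hZD : ZeroOne D := transfer_zeroOne step1
    have step1' : SizeOneStep A D := Or.inl ⟨p, {m₀}, supp r, step1, Finset.card_singleton m₀⟩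
    -- the remaining transfer from D to B
    have hm₀K : m₀ ∉ K := fun hK => (Finset.disjoint_left.mp hMK hm₀) hK
    have trans2 : IsPrimTransfer D p (M.erase m₀) (insert m₀ K) B := by
      refine ⟨hZD, ?_, ?_, ?_, ?_, ?_⟩
      · rw [Finset.disjoint_insert_right]
        exact ⟨Finset.notMem_erase m₀ M,
          Finset.disjoint_of_subset_left (Finset.erase_subset m₀ M) hMK⟩
      · exact fun hp => hpM (Finset.mem_of_mem_erase hp)
      · intro j
        have e1 : ∑ m ∈ M.erase m₀, D m j = ∑ m ∈ M.erase m₀, A m j :=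
          Finset.sum_congr rfl fun m hm => by
            rw [hDoff m (fun e => hpM (e ▸ Finset.mem_of_mem_erase hm))]
        rw [hDp, e1, Finset.sum_insert hm₀K]
        have e2 : ∑ m ∈ M.erase m₀, A m j + A m₀ j = ∑ m ∈ M, A m j :=
          Finset.sum_erase_add M _ hm₀
        have h3 := hAp j
        simp only [hr]
        linarith
      · intro i hi j; rw [hBoff i hi j, ← hDoff i hi]
      · intro j
        rw [hBp j, Finset.sum_insert hm₀K, ← Finset.sum_erase_add M _ hm₀]
        ring
    exact chain_cons h01 step1'
      (ih (M.erase m₀) (Finset.erase_ssubset hm₀) D p (insert m₀ K) B trans2)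

theorem stmt11 {I : Type*} [Fintype I] [DecidableEq I]
    (A B : I → I → ℤ)
    (h : ∃ (p : I) (M K : Finset I), IsPrimTransfer A p M K B) :
    ∃ (n : ℕ) (C : ℕ → I → I → ℤ), C 0 = A ∧ C n = B ∧
      (∀ i ≤ n, ZeroOne (C i)) ∧
      ∀ i < n, SizeOneStep (C i) (C (i + 1)) := by
  obtain ⟨p, M, K, h⟩ := h
  exact key M A p K B h
end

section
/- Let A be a 0–1 square matrix indexed by a finite set I, let B be the primitive transfer of A at p with data (M, K), and suppose l, n ∈ M with l ≠ n and A_{l,n} = 1. Define C by C_i = A_i for i ≠ l and C_l = A_l + A_n − E_n, and let H be the graph of the primitive transfer of C at p with data (M∖{n}, K∪{n}) (the subgraph of C induced by M∖{n}). Then for every m ∈ M with A_{n,m} = 1, one has m ≠ n (the graph of the original transfer has no loop at n), m ∈ M∖{n}, l ∈ M∖{n}, and C_{l,m} = 1; that is, (l,m) is an edge of H whenever (n,m) is an edge of the graph of the original primitive transfer. -/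
open Finset

variable {I : Type*}

lemma two_entries {I : Type*} [Fintype I] [DecidableEq I]
    (A : I → I → ℤ) (p : I) (M K : Finset I)
    (hA : ZeroOne A)
    (hsum : ∀ j, A p j = (∑ m ∈ M, A m j) + ∑ k ∈ K, Erow k j)
    (a b : I) (ha : a ∈ M) (hb : b ∈ M) (hab : a ≠ b) (j : I)
    (h1 : A a j = 1) : A b j = 0 := by
  have hEnn : (0:ℤ) ≤ ∑ k ∈ K, Erow k j := by
    apply Finset.sum_nonneg
    intro k _
    unfold Erow
    split <;> norm_num
  have hsub : ({a, b} : Finset I) ⊆ M := by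
    intro x hx
    simp only [Finset.mem_insert, Finset.mem_singleton] at hx
    rcases hx with h | h <;> simp [h, ha, hb]
  have hle : A a j + A b j ≤ ∑ m ∈ M, A m j := by
    have := Finset.sum_le_sum_of_subset_of_nonneg hsub
      (fun i _ _ => (hA i j).elim (fun h => h.ge) (fun h => by linarith))
    rwa [Finset.sum_pair hab] at this
  have hp1 : A p j ≤ 1 := (hA p j).elim (fun h => by linarith) (fun h => h.le)
  have hb0 : A b j ≤ 0 := by
    have := hsum j
    linarith
  rcases hA b j with h | h
  · exact h
  · linarith

theorem stmt14 {I : Type*} [Fintype I] [DecidableEq I]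
    (A B : I → I → ℤ) (p : I) (M K : Finset I)
    (h : IsPrimTransfer A p M K B)
    (l n : I) (hl : l ∈ M) (hn : n ∈ M) (hln : l ≠ n) (hAln : A l n = 1)
    (C : I → I → ℤ)
    (hC : ∀ i j, C i j = if i = l then A l j + A n j - Erow n j else A i j) :
    ∀ m ∈ M, A n m = 1 → m ≠ n ∧ m ∈ M \ {n} ∧ l ∈ M \ {n} ∧ C l m = 1 := by
  obtain ⟨hA, _, _, hsum, _, _⟩ := h
  intro m hm hAnm
  have hAnn : A n n = 0 := two_entries A p M K hA hsum l n hl hn hln n hAln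
  have hmn : m ≠ n := by
    intro hmn
    rw [hmn] at hAnm
    exact absurd (hAnn ▸ hAnm) (by norm_num)
  have hAlm : A l m = 0 :=
    two_entries A p M K hA hsum n l hn hl (Ne.symm hln) m hAnm
  refine ⟨hmn, by simp [hm, hmn], by simp [hl, hln], ?_⟩
  rw [hC]
  simp only [if_pos rfl, hAlm, hAnm, Erow, if_neg hmn]
  norm_num
end
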